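/- arXiv:2103.08944 — 12 statements merged into one kernel-verified Lean document; each statement's English description precedes it below -/
import Mathlib

section
/- Let R be a commutative unital ring and A ∈ M₂(R). Then A has left idempotent stable range one if and only if A has right idempotent stable range one. -/
/-- Left idempotent stable range one. -/
def HasLeftIdemSR1 {S : Type*} [Ring S] (a : S) : Prop :=
  ∀ x : S, ∃ e : S, IsIdempotentElem e ∧ IsUnit (a + e * (x * a - 1))

/-- Right idempotent stable range one. -/
def HasRightIdemSR1 {S : Type*} [Ring S] (a : S) : Prop :=
  ∀ x : S, ∃ e : S, IsIdempotentElem e ∧ IsUnit (a + (a * x - 1) * e)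

/-- The key determinant identity: it holds for arbitrary 2×2 matrices over a
commutative ring (idempotency of `E` is not even needed). -/
lemma det_key {R : Type*} [CommRing R] (A X E : Matrix (Fin 2) (Fin 2) R) :
    (A + E * (X * A - 1)).det = (A + (A * X - 1) * E).det := by
  simp only [Matrix.det_fin_two, Matrix.add_apply, Matrix.sub_apply, Matrix.mul_apply,
    Matrix.one_apply, Fin.sum_univ_two, Fin.isValue]
  norm_num
  ring

theorem left_iff_right_idemSR1 {R : Type*} [CommRing R] (A : Matrix (Fin 2) (Fin 2) R) :
    HasLeftIdemSR1 A ↔ HasRightIdemSR1 A := by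
  constructor
  · intro h x
    obtain ⟨e, he, hu⟩ := h x
    refine ⟨e, he, ?_⟩
    rw [Matrix.isUnit_iff_isUnit_det] at hu ⊢
    rwa [← det_key]
  · intro h x
    obtain ⟨e, he, hu⟩ := h x
    refine ⟨e, he, ?_⟩
    rw [Matrix.isUnit_iff_isUnit_det] at hu ⊢
    rwa [det_key]
end

section
/- Let n be a nonzero integer and let A ∈ M₂(ℤ) be the matrix whose (i,j) entry equals n (for some fixed position (i,j)) and whose other three entries are zero. Then A has (left) idempotent stable range one if and only if n = 1 or n = −1. -/
open Matrix

theorem HasLeftIdemSR1.exists_not_isUnit {S : Type*} [Ring S] {a : S} (h : HasLeftIdemSR1 a)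
    {y : S} (hy : ¬IsUnit (y * a - 1)) :
    ∃ e : S, IsIdempotentElem e ∧ ¬IsUnit e ∧ IsUnit (a + e * ((y - 1) * a - 1)) := by
  obtain ⟨e, he, hu⟩ := h (y - 1)
  refine ⟨e, he, fun he_unit => hy ?_, hu⟩
  rw [(IsIdempotentElem.iff_eq_one_of_isUnit he_unit).mp he] at hu
  convert hu using 1
  noncomm_ring

theorem IsIdempotentElem.map_eq_one_of_isUnit_add_mul {S T F : Type*} [Ring S] [Ring T]
    [FunLike F S T] [RingHomClass F S T] (f : F) {a e x : S} (he : IsIdempotentElem e)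
    (ha : f a = 0) (hu : IsUnit (a + e * (x * a - 1))) : f e = 1 := by
  have hfe : IsUnit (-f e) := by simpa [ha] using hu.map f
  exact (IsIdempotentElem.iff_eq_one_of_isUnit ((IsUnit.neg_iff _).mp hfe)).mp (he.map f)

theorem Matrix.det_eq_zero_of_isIdempotentElem {ι R : Type*} [Fintype ι] [DecidableEq ι]
    [CommRing R] [IsDomain R] {e : Matrix ι ι R} (he : IsIdempotentElem e) (hu : ¬IsUnit e) :
    e.det = 0 := by
  refine (IsIdempotentElem.iff_eq_zero_or_one.mp (he.map detMonoidHom)).resolve_right fun h1 => ?_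
  exact hu ((isUnit_iff_isUnit_det e).mpr (by simp_all))

theorem Matrix.det_single_mul_single_sub_one {R : Type*} [CommRing R] (i j : Fin 2) (c d : R) :
    (single j i c * single i j d - 1).det = 1 - c * d := by
  rw [single_mul_single_same]
  fin_cases j <;> simp [det_fin_two]

theorem Matrix.isIdempotentElem_single_add_single {ι R : Type*} [Fintype ι] [DecidableEq ι]
    [Ring R] {i k : ι} (hik : i ≠ k) (c : R) : IsIdempotentElem (single k k 1 + single k i c) := by
  simp [IsIdempotentElem, mul_add, add_mul, hik]

theorem hasLeftIdemSR1_single_of_units {R : Type*} [CommRing R] (u : Rˣ) (i j : Fin 2) :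
    HasLeftIdemSR1 (single i j (u : R)) := by
  intro x
  refine ⟨single i.rev i.rev 1 + single i.rev i ↑u⁻¹,
    isIdempotentElem_single_add_single (by fin_cases i <;> decide) _, ?_⟩
  -- Row `i` of the result is that of `u E_ij`; since `xA` lives in column `j`, the entry of
  -- row `i.rev` in the other column is `-1` (if `j = i`) or `-u⁻¹` (if `j = i.rev`).
  rw [isUnit_iff_isUnit_det]
  fin_cases i <;> fin_cases j <;>
    simp [det_fin_two, mul_apply, Fin.sum_univ_two, single_apply, one_apply]

theorem isr1_three_zero_entries (n : ℤ) (hn : n ≠ 0) (i j : Fin 2) :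
    HasLeftIdemSR1 (Matrix.single i j n) ↔ n = 1 ∨ n = -1 := by
  refine ⟨fun h => ?_, fun h => ?_⟩
  · by_contra hn_unit
    have hy : ¬IsUnit (single j i (2 : ℤ) * single i j n - 1) := by
      rw [isUnit_iff_isUnit_det, det_single_mul_single_sub_one, Int.isUnit_iff]
      omega
    obtain ⟨e, he, he_unit, hu⟩ := h.exists_not_isUnit hy
    have hA : (Int.castRingHom (ZMod n.natAbs)).mapMatrix (single i j n) = 0 := by
      rw [RingHom.mapMatrix_apply, map_single, eq_intCast,
        (ZMod.intCast_zmod_eq_zero_iff_dvd n _).mpr Int.natAbs_dvd_self, single_zero]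
    have h01 := (Int.castRingHom (ZMod n.natAbs)).map_det e
    rw [he.map_eq_one_of_isUnit_add_mul _ hA hu, det_one,
      det_eq_zero_of_isIdempotentElem he he_unit, map_zero] at h01
    exact hn_unit (Int.natAbs_eq_natAbs_iff.mp
      (ZMod.subsingleton_iff.mp (subsingleton_of_zero_eq_one h01)))
  · obtain ⟨u, rfl⟩ := Int.isUnit_iff.mpr h
    exact hasLeftIdemSR1_single_of_units u i j
end

section
/- Every idempotent matrix in M₂(ℤ) has (left) idempotent stable range one. -/
theorem idem_isr1_general {S : Type*} [Ring S] (A : S)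
    (hA : A * A = A) : HasLeftIdemSR1 A := by
  intro X
  refine ⟨1 - A, ?_, ?_⟩
  · show (1 - A) * (1 - A) = 1 - A
    rw [mul_sub, sub_mul, sub_mul, one_mul, mul_one, hA]
    noncomm_ring
  · set n : S := (1 - A) * X * A with hn
    have hn2 : n * n = 0 := by
      have h0 : A * (1 - A) = 0 := by rw [mul_sub, mul_one, hA, sub_self]
      calc n * n = (1 - A) * X * (A * (1 - A)) * X * A := by
            rw [hn]; noncomm_ring
        _ = 0 := by rw [h0]; noncomm_ring
    have hw : (2 * A - 1) * (2 * A - 1) = 1 := by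
      have : (2 * A - 1) * (2 * A - 1) = 4 * (A * A) - 4 * A + 1 := by noncomm_ring
      rw [this, hA]; abel
    have hu1 : (1 + n) * (1 - n) = 1 := by
      have : (1 + n) * (1 - n) = 1 - n * n := by noncomm_ring
      rw [this, hn2, sub_zero]
    have hu2 : (1 - n) * (1 + n) = 1 := by
      have : (1 - n) * (1 + n) = 1 - n * n := by noncomm_ring
      rw [this, hn2, sub_zero]
    have key : A + (1 - A) * (X * A - 1) = (1 + n) * (2 * A - 1) := by
      rw [hn]
      have : (1 + (1 - A) * X * A) * (2 * A - 1)
          = (1 - A) * X * (A * A) * 2 - (1 - A) * X * A + 2 * A - 1 := by noncomm_ring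
      rw [this, hA]
      noncomm_ring
    rw [key]
    exact IsUnit.mul ⟨⟨1 + n, 1 - n, hu1, hu2⟩, rfl⟩ ⟨⟨2 * A - 1, 2 * A - 1, hw, hw⟩, rfl⟩

theorem idempotent_int_matrix_isr1 (A : Matrix (Fin 2) (Fin 2) ℤ)
    (hA : IsIdempotentElem A) : HasLeftIdemSR1 A := by
  exact idem_isr1_general A hA
end

section
/- Every nilpotent matrix N ∈ M₂(ℤ) is similar over ℤ to an integer multiple of E₁₂, i.e., there exist U ∈ GL₂(ℤ) and c ∈ ℤ such that U·N·U⁻¹ = c·E₁₂. -/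
/-!
Over a reduced ring a nilpotent `2 × 2` matrix `N` has characteristic polynomial `X²`, so
`N² = 0` and the first column of `N` (or `e₀`, if that column vanishes) lies in `ker N`.
Dividing it by the gcd of its entries gives a primitive kernel vector, which is the first column
of some `P ∈ SL₂`. Then `P⁻¹ N P` has vanishing first column, and its remaining diagonal entry
is its trace, which is nilpotent and hence zero.
-/

open Matrix

theorem Matrix.pow_card_eq_zero_of_isNilpotent {R n : Type*} [CommRing R] [IsReduced R]
    [Fintype n] [DecidableEq n] {N : Matrix n n R} (hN : IsNilpotent N) :
    N ^ Fintype.card n = 0 := by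
  have hnil := Polynomial.isNilpotent_iff.mp (isNilpotent_charpoly_sub_pow_of_isNilpotent hN)
  have hcharpoly : N.charpoly = Polynomial.X ^ Fintype.card n :=
    sub_eq_zero.mp (Polynomial.ext fun i => (hnil i).eq_zero)
  simpa [hcharpoly] using N.aeval_self_charpoly

theorem exists_isCoprime_smul_eq {R : Type*} [EuclideanDomain R] [GCDMonoid R]
    {v : Fin 2 → R} (hv : v ≠ 0) :
    ∃ g : R, g ≠ 0 ∧ ∃ w : Fin 2 → R, IsCoprime (w 0) (w 1) ∧ v = g • w := by
  have hgcd : GCDMonoid.gcd (v 0) (v 1) ≠ 0 := by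
    intro h
    rw [gcd_eq_zero_iff] at h
    exact hv (funext fun i => by fin_cases i <;> simp [h.1, h.2])
  refine ⟨GCDMonoid.gcd (v 0) (v 1), hgcd, fun i => v i / GCDMonoid.gcd (v 0) (v 1),
    isCoprime_div_gcd_div_gcd_of_gcd_ne_zero hgcd, funext fun i => ?_⟩
  have hdvd : GCDMonoid.gcd (v 0) (v 1) ∣ v i := by
    fin_cases i
    exacts [gcd_dvd_left _ _, gcd_dvd_right _ _]
  exact (EuclideanDomain.mul_div_cancel' hgcd hdvd).symm

theorem Matrix.exists_isCoprime_mulVec_eq_zero {R : Type*} [EuclideanDomain R] [GCDMonoid R]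
    {N : Matrix (Fin 2) (Fin 2) R} (hN : N * N = 0) :
    ∃ v : Fin 2 → R, IsCoprime (v 0) (v 1) ∧ N *ᵥ v = 0 := by
  by_cases hcol : N.col 0 = 0
  · exact ⟨Pi.single 0 1, by simp [isCoprime_one_left], by rw [mulVec_single_one, hcol]⟩
  obtain ⟨g, hg, w, hw, hcol_eq⟩ := exists_isCoprime_smul_eq hcol
  have hsmul : g • (N *ᵥ w) = 0 := by
    rw [← mulVec_smul, ← hcol_eq, ← mulVec_single_one, mulVec_mulVec, hN, zero_mulVec]
  exact ⟨w, hw, (smul_eq_zero.mp hsmul).resolve_left hg⟩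

theorem IsCoprime.exists_unit_col_eq {R : Type*} [CommRing R] {v : Fin 2 → R}
    (hv : IsCoprime (v 0) (v 1)) :
    ∃ P : (Matrix (Fin 2) (Fin 2) R)ˣ, (P : Matrix (Fin 2) (Fin 2) R).col 0 = v := by
  obtain ⟨g, hg0, hg1⟩ := hv.exists_SL2_col 0
  exact ⟨SpecialLinearGroup.toGL g, funext fun i => by fin_cases i <;> simpa⟩

theorem Matrix.eq_smul_of_col_eq_zero_of_isNilpotent {R : Type*} [CommRing R] [IsReduced R]
    {M : Matrix (Fin 2) (Fin 2) R} (hcol : M.col 0 = 0) (hM : IsNilpotent M) :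
    M = M 0 1 • !![0, 1; 0, 0] := by
  have h00 : M 0 0 = 0 := congrFun hcol 0
  have h10 : M 1 0 = 0 := congrFun hcol 1
  have h11 : M 1 1 = 0 := by
    have htrace := (isNilpotent_trace_of_isNilpotent hM).eq_zero
    rwa [trace_fin_two, h00, zero_add] at htrace
  ext i j
  fin_cases i <;> fin_cases j <;> simp [h00, h10, h11]

theorem Matrix.exists_conj_eq_smul_of_isNilpotent {R : Type*} [EuclideanDomain R] [GCDMonoid R]
    {N : Matrix (Fin 2) (Fin 2) R} (hN : IsNilpotent N) :
    ∃ (U : (Matrix (Fin 2) (Fin 2) R)ˣ) (c : R),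
      (U : Matrix (Fin 2) (Fin 2) R) * N * (↑U⁻¹ : Matrix (Fin 2) (Fin 2) R)
        = c • !![0, 1; 0, 0] := by
  have hsq : N * N = 0 := by simpa [sq] using pow_card_eq_zero_of_isNilpotent hN
  obtain ⟨v, hv, hNv⟩ := exists_isCoprime_mulVec_eq_zero hsq
  obtain ⟨P, hP⟩ := hv.exists_unit_col_eq
  set M := (↑P⁻¹ : Matrix (Fin 2) (Fin 2) R) * N * (P : Matrix (Fin 2) (Fin 2) R) with hM_def
  have hcol : M.col 0 = 0 := by
    rw [← mulVec_single_one, hM_def, ← mulVec_mulVec, mulVec_single_one, hP, ← mulVec_mulVec,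
      hNv, mulVec_zero]
  have hM : IsNilpotent M := by
    obtain ⟨k, hk⟩ := hN
    exact ⟨k, by rw [hM_def, Units.conj_pow', hk, mul_zero, zero_mul]⟩
  refine ⟨P⁻¹, M 0 1, ?_⟩
  rw [inv_inv]
  exact eq_smul_of_col_eq_zero_of_isNilpotent hcol hM

theorem nilpotent_similar_multiple_of_e12 (N : Matrix (Fin 2) (Fin 2) ℤ)
    (hN : IsNilpotent N) :
    ∃ (U : (Matrix (Fin 2) (Fin 2) ℤ)ˣ) (c : ℤ),
      (U : Matrix (Fin 2) (Fin 2) ℤ) * N * (↑U⁻¹ : Matrix (Fin 2) (Fin 2) ℤ)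
        = c • (!![0, 1; 0, 0] : Matrix (Fin 2) (Fin 2) ℤ) :=
  exists_conj_eq_smul_of_isNilpotent hN
end

section
/- The matrix 2·E₁₂ ∈ M₂(ℤ) is not similar over ℤ to E₁₂, nor to −E₁₂; consequently 2·E₁₂ does not have (left) idempotent stable range one. -/
theorem two_e12_not_similar_and_not_isr1 :
    (¬ ∃ U : (Matrix (Fin 2) (Fin 2) ℤ)ˣ,
        (U : Matrix (Fin 2) (Fin 2) ℤ) * !![0, 2; 0, 0] * (↑U⁻¹ : Matrix (Fin 2) (Fin 2) ℤ)
            = !![0, 1; 0, 0] ∨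
        (U : Matrix (Fin 2) (Fin 2) ℤ) * !![0, 2; 0, 0] * (↑U⁻¹ : Matrix (Fin 2) (Fin 2) ℤ)
            = -!![0, 1; 0, 0]) ∧
    ¬ HasLeftIdemSR1 (!![0, 2; 0, 0] : Matrix (Fin 2) (Fin 2) ℤ) := by
  constructor
  · rintro ⟨U, h | h⟩ <;>
    · have h01 := congrFun (congrFun h 0) 1
      simp [Matrix.mul_apply, Fin.sum_univ_two] at h01
      have h2 : (2:ℤ) ∣ (U : Matrix (Fin 2) (Fin 2) ℤ) 0 0 * 2 *
          ((U : Matrix (Fin 2) (Fin 2) ℤ)⁻¹) 1 1 :=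
        ⟨(U : Matrix (Fin 2) (Fin 2) ℤ) 0 0 * ((U : Matrix (Fin 2) (Fin 2) ℤ)⁻¹) 1 1, by ring⟩
      rw [h01] at h2
      omega
  · intro h
    obtain ⟨e, he, hu⟩ := h !![0,0;2,0]
    rw [Matrix.isUnit_iff_isUnit_det] at hu
    have hdet : Matrix.det (!![0, 2; 0, 0] + e * (!![0,0;2,0] * !![0, 2; 0, 0] - 1))
        = 2 * e 1 0 - 3 * e.det := by
      simp [Matrix.det_fin_two, Matrix.mul_apply, Fin.sum_univ_two]
      ring
    have hd := congrArg Matrix.det he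
    rw [Matrix.det_mul] at hd
    have : e.det = 0 ∨ e.det = 1 := by
      rcases mul_eq_zero.1 (show e.det * (e.det - 1) = 0 by linarith) with h' | h'
      · exact Or.inl h'
      · exact Or.inr (by linarith)
    rcases this with h0 | h1
    · rw [hdet, h0] at hu
      rw [Int.isUnit_iff] at hu
      omega
    · have heu : IsUnit e := by
        rw [Matrix.isUnit_iff_isUnit_det, h1]; exact isUnit_one
      obtain ⟨v, hv⟩ := heu.exists_right_inv
      have he1 : e = 1 := by
        have h2 := congrArg (· * v) he
        simp only [mul_assoc, hv, mul_one] at h2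
        exact h2
      rw [hdet, he1] at hu
      simp [Int.isUnit_iff] at hu
end

section
/- Let a < b be coprime positive integers and q ∈ ℤ. Then the matrix [[a, b], [0, 0]] ∈ M₂(ℤ) has (left) idempotent stable range one if and only if the matrix [[a, b − q·a], [0, 0]] has (left) idempotent stable range one. -/
/-- isr1 is invariant under conjugation by a unit. -/
lemma HasLeftIdemSR1.conj {S : Type*} [Ring S] {a : S} (u : Sˣ)
    (h : HasLeftIdemSR1 a) : HasLeftIdemSR1 ((u⁻¹ : Sˣ) * a * u) := by
  intro x
  obtain ⟨e, he, hv⟩ := h ((u : S) * x * (u⁻¹ : Sˣ))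
  refine ⟨(u⁻¹ : Sˣ) * e * u, ?_, ?_⟩
  · show ((u⁻¹ : Sˣ) * e * u) * ((u⁻¹ : Sˣ) * e * u) = _
    have : ((u⁻¹ : Sˣ) * e * u) * ((u⁻¹ : Sˣ) * e * u)
        = (u⁻¹ : Sˣ) * (e * e) * u := by
      simp [mul_assoc, Units.mul_inv_cancel_left]
    rw [this, he]
  · have key : ((u⁻¹ : Sˣ) * a * u) + ((u⁻¹ : Sˣ) * e * u) * (x * ((u⁻¹ : Sˣ) * a * u) - 1)
        = (u⁻¹ : Sˣ) * (a + e * (((u : S) * x * (u⁻¹ : Sˣ)) * a - 1)) * u := by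
      simp only [mul_sub, sub_mul, mul_add, add_mul, mul_one, one_mul, mul_assoc,
        Units.mul_inv_cancel_left, Units.inv_mul_cancel_left]
    rw [key]
    exact ((u⁻¹.isUnit.mul hv).mul u.isUnit)

theorem isr1_second_column_reduction (a b q : ℤ) (ha : 0 < a) (hab : a < b)
    (hcop : IsCoprime a b) :
    HasLeftIdemSR1 (!![a, b; 0, 0] : Matrix (Fin 2) (Fin 2) ℤ) ↔
      HasLeftIdemSR1 (!![a, b - q * a; 0, 0] : Matrix (Fin 2) (Fin 2) ℤ) := by
  set A : Matrix (Fin 2) (Fin 2) ℤ := !![a, b; 0, 0] with hA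
  set A' : Matrix (Fin 2) (Fin 2) ℤ := !![a, b - q * a; 0, 0] with hA'
  have hUU : (!![1, -q; 0, 1] : Matrix (Fin 2) (Fin 2) ℤ) * !![1, q; 0, 1] = 1 := by
    simp [Matrix.mul_fin_two]
    exact Matrix.one_fin_two.symm
  have hUU' : (!![1, q; 0, 1] : Matrix (Fin 2) (Fin 2) ℤ) * !![1, -q; 0, 1] = 1 := by
    simp [Matrix.mul_fin_two]
    exact Matrix.one_fin_two.symm
  let U : (Matrix (Fin 2) (Fin 2) ℤ)ˣ := ⟨!![1, -q; 0, 1], !![1, q; 0, 1], hUU, hUU'⟩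
  have hconj : (U⁻¹ : (Matrix (Fin 2) (Fin 2) ℤ)ˣ) * A * U = A' := by
    show (!![1, q; 0, 1] : Matrix (Fin 2) (Fin 2) ℤ) * A * !![1, -q; 0, 1] = A'
    rw [hA, hA']
    rw [Matrix.mul_fin_two, Matrix.mul_fin_two]
    ring_nf
  have hconj' : ((U⁻¹)⁻¹ : (Matrix (Fin 2) (Fin 2) ℤ)ˣ) * A' * (U⁻¹ : (Matrix (Fin 2) (Fin 2) ℤ)ˣ) = A := by
    rw [← hconj]
    simp [mul_assoc, ← Units.val_mul]
  constructor
  · intro h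
    have := h.conj U
    rwa [hconj] at this
  · intro h
    have := h.conj U⁻¹
    rwa [hconj'] at this
end

section
/- Let a and b be nonzero coprime integers and let A = [[a, b], [0, 0]] ∈ M₂(ℤ). Then A has (left) idempotent stable range one if and only if A is clean, i.e., A is the sum of an idempotent matrix and a matrix invertible over ℤ. -/
private lemma key_det (a b c d : ℤ) (x : Matrix (Fin 2) (Fin 2) ℤ) :
    (!![a,b;0,0] + !![c*d, c*(1-c*d); d, 1-c*d] * (x * !![a,b;0,0] - 1)).det
      = b*d - a*(1-c*d) := by
  simp only [Matrix.det_fin_two, Matrix.add_apply, Matrix.sub_apply, Matrix.mul_apply,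
    Fin.sum_univ_two, Matrix.one_apply, Matrix.of_apply, Matrix.cons_val', Matrix.cons_val_zero,
    Matrix.cons_val_one, Matrix.head_cons, Matrix.empty_val', Matrix.cons_val_fin_one,
    Matrix.head_fin_const, if_true, if_false, ite_true, ite_false,
    one_ne_zero, zero_ne_one, reduceIte]
  ring

private lemma key_idem (c d : ℤ) :
    IsIdempotentElem (!![c*d, c*(1-c*d); d, 1-c*d] : Matrix (Fin 2) (Fin 2) ℤ) := by
  unfold IsIdempotentElem
  ext i j
  fin_cases i <;> fin_cases j <;>
    simp [Matrix.mul_apply, Fin.sum_univ_two] <;> ring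

private lemma clean_to_cd (a b : ℤ) (ha : a ≠ 0) (hcop : IsCoprime a b)
    (E U : Matrix (Fin 2) (Fin 2) ℤ) (hE : IsIdempotentElem E) (hU : IsUnit U)
    (hsum : (!![a, b; 0, 0] : Matrix (Fin 2) (Fin 2) ℤ) = E + U) :
    ∃ c d : ℤ, IsUnit (b*d - a*(1-c*d)) := by
  have hUdet : IsUnit U.det := (Matrix.isUnit_iff_isUnit_det U).1 hU
  set p := E 0 0 with hp'
  set q := E 0 1 with hq'
  set r := E 1 0 with hr'
  set s := E 1 1 with hs'
  have h00 : p*p + q*r = p := by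
    have := congrFun (congrFun hE 0) 0
    simpa [Matrix.mul_apply, Fin.sum_univ_two] using this
  have h01 : p*q + q*s = q := by
    have := congrFun (congrFun hE 0) 1
    simpa [Matrix.mul_apply, Fin.sum_univ_two] using this
  have h10 : r*p + s*r = r := by
    have := congrFun (congrFun hE 1) 0
    simpa [Matrix.mul_apply, Fin.sum_univ_two, mul_comm] using this
  have h11 : r*q + s*s = s := by
    have := congrFun (congrFun hE 1) 1
    simpa [Matrix.mul_apply, Fin.sum_univ_two] using this
  have hUeq : U = !![a, b; 0, 0] - E := by rw [hsum]; abel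
  have hdet : U.det = b*r + p*s - a*s - q*r := by
    rw [hUeq]
    simp only [Matrix.det_fin_two, Matrix.sub_apply, Matrix.of_apply, Matrix.cons_val',
      Matrix.cons_val_zero, Matrix.cons_val_one, Matrix.head_cons, Matrix.empty_val',
      Matrix.cons_val_fin_one, Matrix.head_fin_const]
    ring
  by_cases hps : p + s = 1
  · have hs1 : s = 1 - p := by linarith
    have hqr : q*r = p*(1-p) := by linear_combination h00
    have hε : U.det = b*r - a*(1-p) := by
      rw [hdet]; linear_combination (p - a) * hs1 - hqr
    have hεu : IsUnit (b*r - a*(1-p)) := hε ▸ hUdet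
    have hcop_r : IsCoprime r (1-p) := by
      rcases Int.isUnit_iff.1 hεu with h1 | h1
      · exact ⟨b, -a, by linarith⟩
      · exact ⟨-b, a, by linarith⟩
    have hrp : r ∣ p := by
      refine hcop_r.dvd_of_dvd_mul_right ⟨q, ?_⟩
      linear_combination -hqr
    obtain ⟨c, hc⟩ := hrp
    refine ⟨c, r, ?_⟩
    have : b*r - a*(1 - c*r) = U.det := by rw [hε, hc]; ring
    exact this ▸ hUdet
  · have hq0 : q = 0 := by
      rcases mul_eq_zero.1 (show q*(p+s-1) = 0 by linear_combination h01) with h | h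
      · exact h
      · exact absurd (by linarith) hps
    have hr0 : r = 0 := by
      rcases mul_eq_zero.1 (show r*(p+s-1) = 0 by linear_combination h10) with h | h
      · exact h
      · exact absurd (by linarith) hps
    have hpp : p*(p-1) = 0 := by linear_combination h00 - r * hq0
    have hss : s*(s-1) = 0 := by linear_combination h11 - q * hr0
    have hdet2 : U.det = p*s - a*s := by rw [hdet, hq0, hr0]; ring
    rcases mul_eq_zero.1 hpp with hp0 | hp1 <;> rcases mul_eq_zero.1 hss with hs0 | hs1
    · rw [hdet2, hp0, hs0] at hUdet; norm_num at hUdet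
    · exact absurd (by linarith) hps
    · rw [hdet2, hs0] at hUdet; norm_num at hUdet
    · have hp1 : p = 1 := by linarith
      have hs1 : s = 1 := by linarith
      rw [hdet2, hp1, hs1] at hUdet
      have ha2 : a = 2 := by
        rcases Int.isUnit_iff.1 hUdet with h | h
        · omega
        · omega
      have hbodd : Odd b := by
        rw [Int.not_even_iff_odd.symm]
        intro hev
        have h2b : (2:ℤ) ∣ b := hev.two_dvd
        have h2a : (2:ℤ) ∣ a := by rw [ha2]
        have : IsUnit (2:ℤ) := hcop.isUnit_of_dvd' h2a h2b
        rcases Int.isUnit_iff.1 this with h | h <;> norm_num at h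
      obtain ⟨k, hk⟩ := hbodd
      refine ⟨1 - k, 1, ?_⟩
      have h1 : b*1 - a*(1 - (1-k)*1) = 1 := by rw [hk, ha2]; ring
      rw [h1]; exact isUnit_one

theorem isr1_iff_clean_zero_second_row (a b : ℤ) (ha : a ≠ 0) (hb : b ≠ 0)
    (hcop : IsCoprime a b) :
    HasLeftIdemSR1 (!![a, b; 0, 0] : Matrix (Fin 2) (Fin 2) ℤ) ↔
      ∃ E U : Matrix (Fin 2) (Fin 2) ℤ,
        IsIdempotentElem E ∧ IsUnit U ∧ (!![a, b; 0, 0] : Matrix (Fin 2) (Fin 2) ℤ) = E + U := by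
  constructor
  · intro h
    obtain ⟨e, he, hu⟩ := h 0
    refine ⟨e, !![a, b; 0, 0] - e, he, ?_, by abel⟩
    have : !![a, b; 0, 0] + e * ((0 : Matrix (Fin 2) (Fin 2) ℤ) * !![a, b; 0, 0] - 1)
        = !![a, b; 0, 0] - e := by
      rw [zero_mul, zero_sub, mul_neg, mul_one, sub_eq_add_neg]
    rwa [this] at hu
  · rintro ⟨E, U, hE, hU, hsum⟩
    obtain ⟨c, d, hcd⟩ := clean_to_cd a b ha hcop E U hE hU hsum
    intro x
    refine ⟨!![c*d, c*(1-c*d); d, 1-c*d], key_idem c d, ?_⟩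
    rw [Matrix.isUnit_iff_isUnit_det, key_det]
    exact hcd
end

section
/- Let a and b be nonzero coprime integers such that there exists an integer z with a + b·z ∈ {1, −1}. Then the matrix A = [[a, b], [0, 0]] ∈ M₂(ℤ) has (left) idempotent stable range one. -/
theorem isr1_of_a_plus_bz_unit (a b : ℤ) (ha : a ≠ 0) (hb : b ≠ 0)
    (hcop : IsCoprime a b) (hz : ∃ z : ℤ, a + b * z = 1 ∨ a + b * z = -1) :
    HasLeftIdemSR1 (!![a, b; 0, 0] : Matrix (Fin 2) (Fin 2) ℤ) := by
  obtain ⟨z, hz⟩ := hz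
  intro x
  refine ⟨!![0, 0; -z, 1], ?_, ?_⟩
  · show _ * _ = _
    ext i j
    fin_cases i <;> fin_cases j <;>
      simp [Matrix.mul_apply, Fin.sum_univ_two]
  · rw [Matrix.isUnit_iff_isUnit_det]
    have hdet : (!![a, b; 0, 0] + !![0, 0; -z, 1] *
        (x * !![a, b; 0, 0] - 1)).det = -(a + b * z) := by
      rw [Matrix.det_fin_two]
      simp [Matrix.add_apply, Matrix.mul_apply, Matrix.sub_apply,
        Matrix.one_apply, Matrix.vecMul, dotProduct, Fin.sum_univ_two]
      ring
    rw [hdet, Int.isUnit_iff]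
    rcases hz with h | h <;> omega
end

section
/- Let a < b be coprime positive integers and let A = [[a, b], [0, 0]] ∈ M₂(ℤ). Then A has (left) idempotent stable range one if and only if there exist integers x, z with a·x + b·z = 1 such that z divides 1 − x or z divides 1 + x. -/
lemma det_key_s15 (a b α β γ δ : ℤ) (X : Matrix (Fin 2) (Fin 2) ℤ) :
    (!![a, b; 0, 0] + !![α, β; γ, δ] * (X * !![a, b; 0, 0] - 1)).det
      = b * γ - a * δ - (X 0 0 * a + X 1 0 * b - 1) * (α * δ - β * γ) := by
  rw [Matrix.eta_fin_two X]
  simp only [Matrix.det_fin_two, Matrix.add_apply, Matrix.mul_apply, Matrix.sub_apply,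
    Matrix.one_apply, Fin.sum_univ_two, Matrix.cons_val', Matrix.cons_val_zero,
    Matrix.cons_val_one, Matrix.head_cons, Matrix.empty_val', Matrix.cons_val_fin_one,
    Matrix.head_fin_const]
  norm_num
  ring

lemma idem_of (α β γ δ : ℤ) (h1 : α + δ = 1) (h2 : α * δ = β * γ) :
    IsIdempotentElem !![α, β; γ, δ] := by
  show _ = _
  ext i j
  fin_cases i <;> fin_cases j <;>
    simp [Matrix.mul_apply, Fin.sum_univ_two]
  · linear_combination α * h1 - h2
  · linear_combination β * h1
  · linear_combination γ * h1
  · linear_combination δ * h1 - h2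

theorem isr1_iff_dvd_of_lt (a b : ℤ) (ha : 0 < a) (hab : a < b) (hcop : IsCoprime a b) :
    HasLeftIdemSR1 (!![a, b; 0, 0] : Matrix (Fin 2) (Fin 2) ℤ) ↔
      ∃ x z : ℤ, a * x + b * z = 1 ∧ (z ∣ (1 - x) ∨ z ∣ (1 + x)) := by
  constructor
  · intro h
    obtain ⟨E, hEi, hU⟩ := h !![2, 0; 0, 0]
    obtain ⟨α, β, γ, δ, rfl⟩ : ∃ α β γ δ, E = !![α, β; γ, δ] :=
      ⟨E 0 0, E 0 1, E 1 0, E 1 1, Matrix.eta_fin_two E⟩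
    have hdet := (Matrix.isUnit_iff_isUnit_det _).1 hU
    rw [det_key_s15] at hdet
    norm_num at hdet
    have hd := Int.isUnit_iff.1 hdet
    have h00 : α * α + β * γ = α := by
      have := congrFun (congrFun hEi 0) 0
      simpa [Matrix.mul_apply, Fin.sum_univ_two] using this
    have h10 : γ * α + δ * γ = γ := by
      have := congrFun (congrFun hEi 1) 0
      simpa [Matrix.mul_apply, Fin.sum_univ_two] using this
    have h11 : γ * β + δ * δ = δ := by
      have := congrFun (congrFun hEi 1) 1
      simpa [Matrix.mul_apply, Fin.sum_univ_two] using this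
    have hDD : (α * δ - β * γ) * (α * δ - β * γ) = α * δ - β * γ := by
      have := congrArg Matrix.det hEi
      rw [Matrix.det_mul, Matrix.det_fin_two_of] at this
      linear_combination this
    have hD01 : α * δ - β * γ = 0 ∨ α * δ - β * γ = 1 := by
      rcases mul_eq_zero.mp (show (α * δ - β * γ) * (α * δ - β * γ - 1) = 0 by
        linear_combination hDD) with h | h
      · exact Or.inl h
      · exact Or.inr (by linarith)
    rcases hD01 with hD | hD
    · -- det E = 0 : rank one case
      have h1 : α * (α + δ - 1) = 0 := by linear_combination h00 + hD
      have h2 : δ * (α + δ - 1) = 0 := by linear_combination h11 + hD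
      have h3 : γ * (α + δ - 1) = 0 := by linear_combination h10
      have hT : α + δ = 1 := by
        by_contra hT
        have hT' : α + δ - 1 ≠ 0 := by omega
        have hγ0 : γ = 0 := by rcases mul_eq_zero.mp h3 with h | h; exact h; exact absurd h hT'
        have hδ0 : δ = 0 := by rcases mul_eq_zero.mp h2 with h | h; exact h; exact absurd h hT'
        rw [hγ0, hδ0] at hd
        simp at hd
      have hd' : b * γ - a * δ = 1 ∨ b * γ - a * δ = -1 := by
        rcases hd with h | h
        · exact Or.inl (by linear_combination h + (2 * a - 1) * hD)
        · exact Or.inr (by linear_combination h + (2 * a - 1) * hD)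
      have hdvdα : γ ∣ α * δ := ⟨β, by linear_combination hD⟩
      rcases hd' with h | h
      · refine ⟨-δ, γ, by linarith, Or.inr ?_⟩
        have hco : IsCoprime γ δ := ⟨b, -a, by linarith [h]⟩
        have : (1 : ℤ) + -δ = α := by linarith
        rw [this]
        exact hco.dvd_of_dvd_mul_right hdvdα
      · refine ⟨δ, -γ, by linarith, Or.inl ?_⟩
        have hco : IsCoprime γ δ := ⟨-b, a, by linarith [h]⟩
        have : (1 : ℤ) - δ = α := by linarith
        rw [this]
        exact (neg_dvd).mpr (hco.dvd_of_dvd_mul_right hdvdα)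
    · -- det E = 1 : E must be the identity, contradiction
      exfalso
      have h1 : α * (α + δ - 1) = 1 := by linear_combination h00 + hD
      have h2 : δ * (α + δ - 1) = 1 := by linear_combination h11 + hD
      have hne : α + δ - 1 ≠ 0 := by
        intro h0
        rw [h0, mul_zero] at h1
        exact one_ne_zero h1.symm
      have hαδ : α - δ = 0 := by
        rcases mul_eq_zero.mp (show (α - δ) * (α + δ - 1) = 0 by
          linear_combination h1 - h2) with h | h
        · exact h
        · exact absurd h hne
      have hα1 : α = 1 := by
        rcases mul_eq_zero.mp (show (α - 1) * (2 * α + 1) = 0 by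
          linear_combination h1 + α * hαδ) with h | h
        · omega
        · omega
      have hδ1 : δ = 1 := by omega
      have hγ0 : γ = 0 := by
        rw [hα1, hδ1] at h10
        linarith
      rw [hα1, hδ1, hγ0] at hd
      rcases hd with h | h
      · have : b * 0 - a * 1 - (2 * a - 1) * (1 * 1 - β * 0) = 1 - 3 * a := by ring
        omega
      · have : b * 0 - a * 1 - (2 * a - 1) * (1 * 1 - β * 0) = 1 - 3 * a := by ring
        omega
  · rintro ⟨x, z, hxz, ⟨w, hw⟩ | ⟨w, hw⟩⟩ X
    · refine ⟨!![1 - x, -(w * x); -z, x], idem_of _ _ _ _ (by ring) (by linear_combination x * hw), ?_⟩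
      rw [Matrix.isUnit_iff_isUnit_det, det_key_s15, Int.isUnit_iff]
      right
      linear_combination (-1) * hxz - (X 0 0 * a + X 1 0 * b - 1) * x * hw
    · refine ⟨!![1 + x, -(w * x); z, -x], idem_of _ _ _ _ (by ring) (by linear_combination (-x) * hw), ?_⟩
      rw [Matrix.isUnit_iff_isUnit_det, det_key_s15, Int.isUnit_iff]
      left
      linear_combination hxz + (X 0 0 * a + X 1 0 * b - 1) * x * hw
end

section
/- The matrix [[5, 12], [0, 0]] ∈ M₂(ℤ) has (left) idempotent stable range one. -/
theorem matrix_5_12_isr1 :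
    HasLeftIdemSR1 (!![5, 12; 0, 0] : Matrix (Fin 2) (Fin 2) ℤ) := by
  intro x
  refine ⟨!![-4, -10; 2, 5], ?_, ?_⟩
  · show _ * _ = _
    norm_num [Matrix.mul_fin_two]
  · rw [Matrix.isUnit_iff_isUnit_det]
    have h : (!![5, 12; 0, 0] + !![-4, -10; 2, 5] *
        (x * !![5, 12; 0, 0] - 1) : Matrix (Fin 2) (Fin 2) ℤ).det = -1 := by
      rw [Matrix.eta_fin_two x]
      simp [Matrix.det_fin_two, Matrix.mul_fin_two, Matrix.one_fin_two]
      ring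
    rw [h]
    exact isUnit_one.neg
end

section
/- The matrix [[12, 5], [0, 0]] ∈ M₂(ℤ) is not clean (it is not the sum of an idempotent matrix and a matrix invertible over ℤ) and does not have (left) idempotent stable range one. -/
lemma keyZ (a b c d : ℤ) (h1 : a * a + b * c = a) (h2 : a * b + b * d = b)
    (h3 : c * a + d * c = c) (h4 : c * b + d * d = d)
    (h5 : -((12 - a) * d) + (5 - b) * c = 1 ∨ -((12 - a) * d) + (5 - b) * c = -1) :
    False := by
  have hfac : (a - d) * (a + d - 1) = 0 := by linear_combination h1 - h4 + b * h3 - c * h2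
  rcases mul_eq_zero.mp hfac with had | hs
  · -- a = d case
    have had' : a = d := by omega
    have hne : a + d - 1 ≠ 0 := by omega
    have hb : b = 0 := by
      rcases mul_eq_zero.mp (show b * (a + d - 1) = 0 by linear_combination h2) with h | h
      · exact h
      · exact absurd h hne
    have hc : c = 0 := by
      rcases mul_eq_zero.mp (show c * (a + d - 1) = 0 by linear_combination h3) with h | h
      · exact h
      · exact absurd h hne
    have ha01 : a = 0 ∨ a = 1 := by
      rcases mul_eq_zero.mp (show a * (a - 1) = 0 by
        linear_combination h1 - b * hc) with h | h
      · exact Or.inl h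
      · exact Or.inr (by omega)
    subst hb hc had'
    rcases ha01 with h | h <;> subst h <;> rcases h5 with h5 | h5 <;> norm_num at h5
  · -- a + d = 1 case
    have hbc : b * c = d - d * d := by linear_combination h1 + (d - a) * hs
    rcases h5 with hdet | hdet
    · have hd : 12 * d = 5 * c - 1 := by linear_combination -hdet + a * hs - h1
      have hdvd : c ∣ 13 :=
        ⟨70 - 25 * c - 144 * b, by linear_combination 144 * hbc - (12 * d + 5 * c - 13) * hd⟩
      have hle := Int.le_of_dvd (by norm_num) hdvd
      have hge := Int.le_of_dvd (by norm_num) ((neg_dvd).mpr hdvd)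
      have hge2 : -13 ≤ c := by omega
      interval_cases c <;> first | exact absurd hdvd (by decide) | omega
    · have hd : 12 * d = 5 * c + 1 := by linear_combination -hdet + a * hs - h1
      have hdvd : c ∣ 11 :=
        ⟨25 * c + 144 * b - 50, by linear_combination -144 * hbc - (11 - 12 * d - 5 * c) * hd⟩
      have hle := Int.le_of_dvd (by norm_num) hdvd
      have hge := Int.le_of_dvd (by norm_num) ((neg_dvd).mpr hdvd)
      have hge2 : -13 ≤ c := by omega
      interval_cases c <;> first | exact absurd hdvd (by decide) | omega

lemma notCleanAux (E : Matrix (Fin 2) (Fin 2) ℤ) (hE : IsIdempotentElem E)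
    (hU : IsUnit ((!![12, 5; 0, 0] : Matrix (Fin 2) (Fin 2) ℤ) - E)) : False := by
  have h00 : (E * E) 0 0 = E 0 0 := by rw [hE]
  have h01 : (E * E) 0 1 = E 0 1 := by rw [hE]
  have h10 : (E * E) 1 0 = E 1 0 := by rw [hE]
  have h11 : (E * E) 1 1 = E 1 1 := by rw [hE]
  simp [Matrix.mul_apply, Fin.sum_univ_two] at h00 h01 h10 h11
  have hdet := Int.isUnit_iff.mp ((Matrix.isUnit_iff_isUnit_det _).mp hU)
  rw [Matrix.det_fin_two] at hdet
  simp [Matrix.sub_apply] at hdet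
  exact keyZ (E 0 0) (E 0 1) (E 1 0) (E 1 1) h00 h01 h10 h11 hdet

theorem matrix_12_5_not_clean_not_isr1 :
    (¬ ∃ E U : Matrix (Fin 2) (Fin 2) ℤ,
        IsIdempotentElem E ∧ IsUnit U ∧ (!![12, 5; 0, 0] : Matrix (Fin 2) (Fin 2) ℤ) = E + U) ∧
    ¬ HasLeftIdemSR1 (!![12, 5; 0, 0] : Matrix (Fin 2) (Fin 2) ℤ) := by
  constructor
  · rintro ⟨E, U, hE, hU, hsum⟩
    refine notCleanAux E hE ?_
    have : (!![12, 5; 0, 0] : Matrix (Fin 2) (Fin 2) ℤ) - E = U := by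
      rw [hsum, add_sub_cancel_left]
    rwa [this]
  · intro h
    obtain ⟨e, he, hu⟩ := h 0
    refine notCleanAux e he ?_
    have : (!![12, 5; 0, 0] : Matrix (Fin 2) (Fin 2) ℤ) + e * ((0 : Matrix (Fin 2) (Fin 2) ℤ) * !![12, 5; 0, 0] - 1) = !![12, 5; 0, 0] - e := by
      rw [zero_mul, zero_sub, mul_neg_one, sub_eq_add_neg]
    rwa [this] at hu
end

section
/- The matrix A = [[2, 1], [0, 0]] ∈ M₂(ℤ) has (left) idempotent stable range one, but its square A² = [[4, 2], [0, 0]] does not have (left) idempotent stable range one; hence the set of idempotent stable range one elements of M₂(ℤ) is not closed under multiplication. -/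
theorem isr1_not_multiplicatively_closed :
    HasLeftIdemSR1 (!![2, 1; 0, 0] : Matrix (Fin 2) (Fin 2) ℤ) ∧
    (!![2, 1; 0, 0] : Matrix (Fin 2) (Fin 2) ℤ) * !![2, 1; 0, 0] = !![4, 2; 0, 0] ∧
    ¬ HasLeftIdemSR1 (!![4, 2; 0, 0] : Matrix (Fin 2) (Fin 2) ℤ) := by
  refine ⟨?_, ?_, ?_⟩
  · intro x
    refine ⟨!![0, 0; 1, 1], ?_, ?_⟩
    · show _ * _ = _
      ext i j
      fin_cases i <;> fin_cases j <;>
        simp [Matrix.mul_apply, Fin.sum_univ_two]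
    · rw [Matrix.isUnit_iff_isUnit_det]
      have hdet : (!![2, 1; 0, 0] + !![0, 0; 1, 1] *
          (x * !![2, 1; 0, 0] - 1)).det = -1 := by
        simp [Matrix.det_fin_two, Matrix.add_apply, Matrix.mul_apply,
          Matrix.sub_apply, Matrix.one_apply, Fin.sum_univ_two,
          Matrix.vecMul, Matrix.vecHead, Matrix.vecTail, dotProduct]
        ring
      rw [hdet]
      exact isUnit_one.neg
  · ext i j
    fin_cases i <;> fin_cases j <;>
      simp [Matrix.mul_apply, Fin.sum_univ_two]
  · intro h
    obtain ⟨e, he, hu⟩ := h 0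
    rw [Matrix.isUnit_iff_isUnit_det, Int.isUnit_iff] at hu
    set p := e 0 0 with hp
    set q := e 0 1 with hq
    set r := e 1 0 with hr
    set s := e 1 1 with hs
    have h00 : p * p + q * r = p := by
      have := congrFun (congrFun he 0) 0
      simpa [Matrix.mul_apply, Fin.sum_univ_two, ← hp, ← hq, ← hr, ← hs] using this
    have h01 : p * q + q * s = q := by
      have := congrFun (congrFun he 0) 1
      simpa [Matrix.mul_apply, Fin.sum_univ_two, ← hp, ← hq, ← hr, ← hs] using this
    have h10 : r * p + s * r = r := by
      have := congrFun (congrFun he 1) 0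
      simpa [Matrix.mul_apply, Fin.sum_univ_two, ← hp, ← hq, ← hr, ← hs] using this
    have h11 : r * q + s * s = s := by
      have := congrFun (congrFun he 1) 1
      simpa [Matrix.mul_apply, Fin.sum_univ_two, ← hp, ← hq, ← hr, ← hs] using this
    have hdet : (!![4, 2; 0, 0] + e * ((0 : Matrix (Fin 2) (Fin 2) ℤ) * !![4, 2; 0, 0] - 1)).det
        = -4 * s + p * s + 2 * r - q * r := by
      simp [Matrix.det_fin_two, Matrix.add_apply, Matrix.mul_apply,
        Matrix.sub_apply, Matrix.one_apply, Fin.sum_univ_two, ← hp, ← hq, ← hr, ← hs]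
      ring
    rw [hdet] at hu
    have hsplit : (p - s) * (p + s - 1) = 0 := by linear_combination h00 - h11
    rcases mul_eq_zero.mp hsplit with h1 | h1
    · -- p = s
      have hps : p = s := by omega
      have hq0 : q * (2 * s - 1) = 0 := by linear_combination h01 - q * h1
      have hr0 : r * (2 * s - 1) = 0 := by linear_combination h10 - r * h1
      have hso : (2 : ℤ) * s - 1 ≠ 0 := by omega
      have hq0' : q = 0 := by
        rcases mul_eq_zero.mp hq0 with h | h
        · exact h
        · exact absurd h hso
      have hr0' : r = 0 := by
        rcases mul_eq_zero.mp hr0 with h | h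
        · exact h
        · exact absurd h hso
      have hss : s * s = s := by linear_combination h11 - q * hr0'
      have : s = 0 ∨ s = 1 := by
        rcases mul_eq_zero.mp (by linarith : s * (s - 1) = 0) with h | h
        · left; exact h
        · right; omega
      rcases this with h | h <;> rw [hps, h, hq0', hr0'] at hu <;> norm_num at hu
    · -- p + s = 1
      have hps : p = 1 - s := by omega
      have hqr : q * r = s - s * s := by linear_combination h11
      rw [hps, hqr] at hu
      rcases hu with h | h <;> (ring_nf at h; omega)
end
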